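/- arXiv:1305.7024 — 2 statements merged into one kernel-verified Lean document; each statement's English description precedes it below -/
import Mathlib

section
/- For fixed foci O and P ≠ O, the eccentricity ε(d) = √(1 + d²/OP²) − d/OP is a strictly decreasing function of d on (0,∞), and for each fixed x ∈ S² the polar radius ρ_d(x) = d/(1 − ε(d) x·m) is a strictly increasing function of d on (0,∞). -/
noncomputable section

open MeasureTheory Metric Set Filter Topology
attribute [local instance] Classical.propDecidable

/-- Real inner product on `ℝ³`. -/
noncomputable def rinner (x y : EuclideanSpace ℝ (Fin 3)) : ℝ := inner ℝ x y

/-- Euclidean 3-space. -/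
abbrev E3 : Type := EuclideanSpace ℝ (Fin 3)

/-- The unit sphere `S²` in `ℝ³`. -/
def sphere2 : Set E3 := Metric.sphere (0 : E3) 1

/-- Unit vector `m = P/OP` in the direction of `P`. -/
noncomputable def axisDir (P : E3) : E3 := ‖P‖⁻¹ • P

/-- Eccentricity `ε = √(1 + d²/OP²) − d/OP` of the ellipsoid `E_d(P)`. -/
noncomputable def ecc (P : E3) (d : ℝ) : ℝ :=
  Real.sqrt (1 + d ^ 2 / ‖P‖ ^ 2) - d / ‖P‖

/-- Polar radius `ρ_d(x) = d/(1 − ε x·m)` of the ellipsoid `E_d(P)`. -/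
noncomputable def polarRadius (P : E3) (d : ℝ) (x : E3) : ℝ :=
  d / (1 - ecc P d * rinner x (axisDir P))

/-- The constant `c_δ = √(1 + δ²) − δ`. -/
noncomputable def cconst (δ : ℝ) : ℝ := Real.sqrt (1 + δ ^ 2) - δ

/-- Outer unit normal `(x − εm)/|x − εm|` of the ellipsoid `E_d(P)` at the point `ρ_d(x)x`. -/
noncomputable def normalVec (P : E3) (d : ℝ) (x : E3) : E3 :=
  ‖x - ecc P d • axisDir P‖⁻¹ • (x - ecc P d • axisDir P)

/-- The ellipsoid `E_d(P)` supports the surface `{ρ(x)x : x ∈ closure Ω}` at `ρ(x₀)x₀`. -/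
def IsSupportingAt (Ω : Set E3) (ρ : E3 → ℝ) (P : E3) (d : ℝ) (x₀ : E3) : Prop :=
  P ≠ 0 ∧ 0 < d ∧ (∀ x ∈ closure Ω, ρ x ≤ polarRadius P d x) ∧
    ρ x₀ = polarRadius P d x₀

/-- `{ρ(x)x : x ∈ closure Ω}` is a reflector from `closure Ω` to the target `D`. -/
def IsReflector (Ω D : Set E3) (ρ : E3 → ℝ) : Prop :=
  (∀ x ∈ closure Ω, 0 < ρ x) ∧
  ∀ x₀ ∈ closure Ω, ∃ P ∈ D, ∃ d : ℝ, IsSupportingAt Ω ρ P d x₀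

/-- Tracing set `τ_σ(E)`: directions reflected into `E`. -/
def tracing (Ω : Set E3) (ρ : E3 → ℝ) (E : Set E3) : Set E3 :=
  {x | x ∈ closure Ω ∧ ∃ P ∈ E, ∃ d : ℝ, IsSupportingAt Ω ρ P d x}

/-- The class `A(δ)`: reflectors all of whose points admit a supporting ellipsoid with
`d ≥ δ M`. -/
def InClassA (Ω D : Set E3) (ρ : E3 → ℝ) (δ M : ℝ) : Prop :=
  IsReflector Ω D ρ ∧
  ∀ x₀ ∈ closure Ω, ∃ P ∈ D, ∃ d : ℝ, δ * M ≤ d ∧ IsSupportingAt Ω ρ P d x₀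

/-- The boundary `∂Ω` of `Ω` relative to the sphere `S²`. -/
def sphFrontier (Ω : Set E3) : Set E3 := closure Ω ∩ closure (sphere2 \ Ω)

/-- `D` is contained in a plane of `ℝ³`. -/
def InPlane (D : Set E3) : Prop :=
  ∃ v : E3, v ≠ 0 ∧ ∃ c : ℝ, ∀ P ∈ D, rinner P v = c

/-- The set `S` of directions traced to two distinct target points. -/
def ambigSet (Ω D : Set E3) (ρ : E3 → ℝ) : Set E3 :=
  {x | x ∈ closure Ω ∧ ∃ P₁ ∈ D, ∃ P₂ ∈ D, P₁ ≠ P₂ ∧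
    x ∈ tracing Ω ρ {P₁} ∧ x ∈ tracing Ω ρ {P₂}}

/-- A canonical selection of the outer unit normal `ν(x)` of the reflector; at every point
where the supporting ellipsoid is unique (a.e. point) this is the normal of the
supporting ellipsoid. -/
noncomputable def nuSel (Ω D : Set E3) (ρ : E3 → ℝ) (x : E3) : E3 :=
  if h : ∃ p : E3 × ℝ, p.1 ∈ D ∧ IsSupportingAt Ω ρ p.1 p.2 x then
    normalVec h.choose.1 h.choose.2 x
  else 0

/-- A canonical selection of the reflector map `𝒩_σ(x)`; at every point with a unique
supporting ellipsoid (a.e. point) this is the target point the ray `x` is reflected to. -/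
noncomputable def reflMapSel (Ω D : Set E3) (ρ : E3 → ℝ) (x : E3) : E3 :=
  if h : ∃ p : E3 × ℝ, p.1 ∈ D ∧ IsSupportingAt Ω ρ p.1 p.2 x then h.choose.1 else 0

/-- The reflector measure `μ(E) = ∫_{τ_σ(E)} f(x) (x·ν(x))/ρ(x)² dx`,
the irradiance received on `E ⊆ D`. -/
noncomputable def reflMeasure (Ω D : Set E3) (ρ f : E3 → ℝ) (E : Set E3) : ℝ :=
  ∫ x in tracing Ω ρ E, f x * rinner x (nuSel Ω D ρ x) / ρ x ^ 2 ∂μH[2]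

/-! With `δ = d / OP` the eccentricity is `c(δ) = √(1 + δ²) − δ`, and both claims come from the
strict `1`-Lipschitz bound `|√(1 + v²) − √(1 + u²)| < v − u` for `u < v`, which says at once that
`c` is decreasing. For the polar radius put `t = x·m ∈ [−1, 1]` and `u = OP / d`: then
`ρ_d(x) = OP / (u − t√(1 + u²) + t)`. By the same bound the denominator is strictly increasing in
`u`, and it vanishes at `u = 0`; so it is positive and decreasing in `d`. -/

theorem abs_sqrt_one_add_sq_sub_sqrt_one_add_sq_lt {u v : ℝ} (huv : u < v) :
    |√(1 + v ^ 2) - √(1 + u ^ 2)| < v - u := by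
  have ha := Real.sq_sqrt (show (0 : ℝ) ≤ 1 + u ^ 2 by positivity)
  have hb := Real.sq_sqrt (show (0 : ℝ) ≤ 1 + v ^ 2 by positivity)
  have hua : |u| < √(1 + u ^ 2) := by
    rw [← Real.sqrt_sq_eq_abs]; exact Real.sqrt_lt_sqrt (sq_nonneg u) (by linarith)
  have hvb : |v| < √(1 + v ^ 2) := by
    rw [← Real.sqrt_sq_eq_abs]; exact Real.sqrt_lt_sqrt (sq_nonneg v) (by linarith)
  have hsum : |v + u| < √(1 + v ^ 2) + √(1 + u ^ 2) :=
    (abs_add_le v u).trans_lt (add_lt_add hvb hua)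
  -- the difference of the two roots times their sum is `(v - u)(v + u)`
  rw [abs_sub_lt_iff]
  constructor <;> nlinarith [abs_lt.mp hsum, abs_nonneg u, abs_nonneg v]

theorem cconst_strictAnti : StrictAnti cconst := by
  intro u v huv
  have := (abs_lt.mp (abs_sqrt_one_add_sq_sub_sqrt_one_add_sq_lt huv)).2
  simp only [cconst]
  linarith

theorem strictMono_sub_mul_sqrt_one_add_sq {t : ℝ} (ht : |t| ≤ 1) :
    StrictMono fun u : ℝ => u - t * √(1 + u ^ 2) := by
  intro u v huv
  have hlip := abs_sqrt_one_add_sq_sub_sqrt_one_add_sq_lt huv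
  have : t * (√(1 + v ^ 2) - √(1 + u ^ 2)) < v - u :=
    calc t * (√(1 + v ^ 2) - √(1 + u ^ 2))
        ≤ |t| * |√(1 + v ^ 2) - √(1 + u ^ 2)| := by rw [← abs_mul]; exact le_abs_self _
      _ ≤ |√(1 + v ^ 2) - √(1 + u ^ 2)| := mul_le_of_le_one_left (abs_nonneg _) ht
      _ < v - u := hlip
  simp only
  linarith

theorem sqrt_one_add_sq_mul_inv {δ : ℝ} (hδ : 0 < δ) :
    √(1 + δ ^ 2) * δ⁻¹ = √(1 + δ⁻¹ ^ 2) := by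
  have : 1 + δ⁻¹ ^ 2 = (1 + δ ^ 2) * δ⁻¹ ^ 2 := by field_simp; ring
  rw [this, Real.sqrt_mul (by positivity), Real.sqrt_sq (inv_nonneg.mpr hδ.le)]

theorem div_one_sub_cconst_mul_eq {r d t : ℝ} (hr : 0 < r) (hd : 0 < d) :
    d / (1 - cconst (d / r) * t) = r / (r / d - t * √(1 + (r / d) ^ 2) + t) := by
  have key := sqrt_one_add_sq_mul_inv (div_pos hd hr)
  rw [inv_div] at key
  rw [← key, cconst]
  field_simp
  ring

theorem strictMonoOn_div_one_sub_cconst_mul {r t : ℝ} (hr : 0 < r) (ht : |t| ≤ 1) :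
    StrictMonoOn (fun d => d / (1 - cconst (d / r) * t)) (Ioi 0) := by
  set g : ℝ → ℝ := fun u => u - t * √(1 + u ^ 2)
  have hg : StrictMono g := strictMono_sub_mul_sqrt_one_add_sq ht
  intro d₁ hd₁ d₂ hd₂ hd
  rw [mem_Ioi] at hd₁ hd₂
  simp only [div_one_sub_cconst_mul_eq hr hd₁, div_one_sub_cconst_mul_eq hr hd₂]
  -- `g 0 = -t`, so the denominators `g (r / d) + t` are positive
  have hpos : 0 < g (r / d₂) + t := by
    have := hg (div_pos hr hd₂)
    simp only [g] at this ⊢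
    norm_num at this
    linarith
  have hlt : g (r / d₂) < g (r / d₁) := hg (div_lt_div_of_pos_left hr hd₁ hd)
  exact div_lt_div_of_pos_left hr hpos (by linarith)

theorem ecc_eq_cconst (P : E3) (d : ℝ) : ecc P d = cconst (d / ‖P‖) := by
  rw [ecc, cconst, div_pow]

theorem abs_rinner_axisDir_le_one {x P : E3} (hx : x ∈ sphere2) (hP : P ≠ 0) :
    |rinner x (axisDir P)| ≤ 1 := by
  have hx1 : ‖x‖ = 1 := mem_sphere_zero_iff_norm.mp hx
  have hm1 : ‖axisDir P‖ = 1 := by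
    rw [axisDir, norm_smul, norm_inv, norm_norm, inv_mul_cancel₀ (norm_ne_zero_iff.mpr hP)]
  simpa [rinner, hx1, hm1] using abs_real_inner_le_norm x (axisDir P)

/-- For fixed foci `O` and `P ≠ O`, the eccentricity `ε(d)` is strictly
decreasing in `d` on `(0,∞)`, and for each fixed `x ∈ S²` the polar radius `ρ_d(x)` is
strictly increasing in `d` on `(0,∞)`. -/
theorem ecc_strictAnti_and_polarRadius_strictMono (P : E3) (hP : P ≠ 0) :
    StrictAntiOn (fun d : ℝ => ecc P d) (Set.Ioi (0 : ℝ)) ∧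
    ∀ x ∈ sphere2, StrictMonoOn (fun d : ℝ => polarRadius P d x) (Set.Ioi (0 : ℝ)) := by
  have hr : 0 < ‖P‖ := norm_pos_iff.mpr hP
  simp only [polarRadius, ecc_eq_cconst]
  exact ⟨(cconst_strictAnti.comp_strictMono (strictMono_div_right_of_pos hr)).strictAntiOn _,
    fun x hx => strictMonoOn_div_one_sub_cconst_mul hr (abs_rinner_axisDir_le_one hx hP)⟩
end
end

section
/- Suppose σ is a reflector from Ω̄ to D, where D is compact with O ∉ D and D is contained in a plane or D is countable. If A and B are disjoint subsets of D, then τ_σ(A) ∩ τ_σ(B) has surface measure zero in S². -/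
/-!
Write `u = 1 / ρ`. A supporting ellipsoid `E_d(P)` at `x` gives the affine minorant
`y ↦ d⁻¹ - ⟪y, g⟫` of `u` on `closure Ω` touching it at `x`, and `P` is recovered from
`(d⁻¹, g)`. A direction traced both into `A` and into `B` carries two such minorants whose foci
`P₁ ∈ A` and `P₂ ∈ B` differ. Rademacher's theorem, applied in charts of `S²` to the Lipschitz
envelopes of the minorants with bounded data, shows that for a.e. `x` the two gradients differ by
a multiple of `x`: both ellipsoids have the same tangent plane at `ρ(x) x`. By the reflection law
`ρ(x) x` then lies on the line `P₁ P₂`, hence on every plane through `P₁` and `P₂`.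

If `D` is planar or countable, countably many planes contain every pair of points of `D`, and the
reflector meets each plane in a null set: a plane through `O` cuts `S²` in a great circle, and for
any other plane the supporting ellipsoids keep the section on one side of a great circle through
each of its points, which makes it porous.
-/

noncomputable section

open MeasureTheory Metric Set Filter Topology
attribute [local instance] Classical.propDecidable

open scoped RealInnerProductSpace NNReal ENNReal

theorem LipschitzWith.ciSup {α ι : Type*} [PseudoMetricSpace α] {K : ℝ≥0} {f : ι → α → ℝ}
    (hf : ∀ i, LipschitzWith K (f i)) (hb : ∀ x, BddAbove (range fun i => f i x)) :
    LipschitzWith K fun x => ⨆ i, f i x := by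
  rcases isEmpty_or_nonempty ι with hι | hι
  · simpa only [Real.iSup_of_isEmpty] using
      (LipschitzWith.const (α := α) (0 : ℝ)).weaken zero_le
  refine LipschitzWith.of_le_add_mul K fun x y => ciSup_le fun i => ?_
  calc f i x ≤ f i y + K * dist x y := (hf i).le_add_mul x y
    _ ≤ (⨆ i, f i y) + K * dist x y := by gcongr; exact le_ciSup (hb y) i

/-! ### Affine minorants -/

section AffineMinorant

variable {E : Type*} [NormedAddCommGroup E] [InnerProductSpace ℝ E]

def IsTouchingMinorant (s : Set E) (f : E → ℝ) (x : E) (a : ℝ) (g : E) : Prop :=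
  (∀ y ∈ s, a - ⟪y, g⟫ ≤ f y) ∧ a - ⟪x, g⟫ = f x

theorem eq_inner_smul_of_forall_inner_eq_zero {x v : E} (hx : ‖x‖ = 1)
    (h : ∀ τ, ⟪τ, x⟫ = 0 → ⟪τ, v⟫ = 0) : v = ⟪x, v⟫ • x := by
  set τ := v - ⟪x, v⟫ • x
  have hτx : ⟪τ, x⟫ = 0 := by
    rw [inner_sub_left, real_inner_smul_left, real_inner_self_eq_norm_sq, hx, real_inner_comm]
    ring
  have hττ : ⟪τ, τ⟫ = 0 := by
    rw [inner_sub_right, real_inner_smul_right, h τ hτx, hτx, mul_zero, sub_zero]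
  exact sub_eq_zero.mp (inner_self_eq_zero.mp hττ)

/-- Both `f ∘ φ + ⟪g_i, φ ·⟫` attain their minimum `a_i` at `p`. -/
theorem IsTouchingMinorant.inner_fderiv_eq {F : Type*} [NormedAddCommGroup F] [NormedSpace ℝ F]
    {f : E → ℝ} {φ : F → E} {L : F →L[ℝ] E} {p : F} {a₁ a₂ : ℝ} {g₁ g₂ : E}
    (hφ : HasFDerivAt φ L p) (hf : DifferentiableAt ℝ (f ∘ φ) p)
    (h₁ : IsTouchingMinorant univ f (φ p) a₁ g₁) (h₂ : IsTouchingMinorant univ f (φ p) a₂ g₂)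
    (k : F) : ⟪L k, g₁⟫ = ⟪L k, g₂⟫ := by
  have key : ∀ a g, IsTouchingMinorant univ f (φ p) a g →
      fderiv ℝ (f ∘ φ) p k = -⟪L k, g⟫ := by
    intro a g ⟨hle, heq⟩
    have hψ : HasFDerivAt (fun q => (f ∘ φ) q + ⟪g, φ q⟫)
        (fderiv ℝ (f ∘ φ) p + (innerSL ℝ g).comp L) p :=
      hf.hasFDerivAt.add (((innerSL ℝ g).hasFDerivAt).comp p hφ)
    have hmin : IsLocalMin (fun q => (f ∘ φ) q + ⟪g, φ q⟫) p :=
      Filter.Eventually.of_forall fun q => by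
        have := hle (φ q) (mem_univ _)
        simp only [Function.comp_apply, real_inner_comm g] at this heq ⊢
        linarith
    have := congrArg (· k) (hmin.hasFDerivAt_eq_zero hψ)
    simp only [add_apply, ContinuousLinearMap.comp_apply, coe_innerSL_apply, zero_apply] at this
    linarith [real_inner_comm (L k) g]
  linarith [key a₁ g₁ h₁, key a₂ g₂ h₂]

def minorantEnvelope (s : Set E) (f : E → ℝ) (k : ℝ≥0) (y : E) : ℝ :=
  ⨆ q : {q : ℝ × E // |q.1| ≤ k ∧ ‖q.2‖ ≤ k ∧ ∀ y ∈ s, q.1 - ⟪y, q.2⟫ ≤ f y}, q.1.1 - ⟪y, q.1.2⟫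

theorem bddAbove_minorantEnvelope (s : Set E) (f : E → ℝ) (k : ℝ≥0) (y : E) :
    BddAbove (range fun q : {q : ℝ × E // |q.1| ≤ k ∧ ‖q.2‖ ≤ k ∧ ∀ y ∈ s, q.1 - ⟪y, q.2⟫ ≤ f y} =>
      q.1.1 - ⟪y, q.1.2⟫) := by
  refine ⟨k + ‖y‖ * k, ?_⟩
  rintro _ ⟨⟨⟨a, g⟩, ha, hg, -⟩, rfl⟩
  have h1 : -⟪y, g⟫ ≤ ‖y‖ * ‖g‖ := by
    linarith [abs_real_inner_le_norm y g, neg_abs_le ⟪y, g⟫]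
  have h2 : ‖y‖ * ‖g‖ ≤ ‖y‖ * k := by gcongr
  dsimp only
  linarith [le_abs_self a]

theorem lipschitzWith_minorantEnvelope (s : Set E) (f : E → ℝ) (k : ℝ≥0) :
    LipschitzWith k (minorantEnvelope s f k) := by
  refine LipschitzWith.ciSup (fun q => LipschitzWith.of_dist_le_mul fun y y' => ?_)
    (bddAbove_minorantEnvelope s f k)
  rw [Real.dist_eq, dist_eq_norm, sub_sub_sub_cancel_left, ← inner_sub_left, norm_sub_rev]
  calc |⟪y' - y, q.1.2⟫| ≤ ‖y' - y‖ * ‖q.1.2‖ := abs_real_inner_le_norm _ _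
    _ ≤ k * ‖y' - y‖ := by rw [mul_comm]; gcongr; exact q.2.2.1

theorem IsTouchingMinorant.isTouchingMinorant_minorantEnvelope {s : Set E} {f : E → ℝ} {x : E}
    {a : ℝ} {g : E} (h : IsTouchingMinorant s f x a g) (hx : x ∈ s) {k : ℝ≥0} (ha : |a| ≤ k)
    (hg : ‖g‖ ≤ k) : IsTouchingMinorant univ (minorantEnvelope s f k) x a g := by
  let q : {q : ℝ × E // |q.1| ≤ k ∧ ‖q.2‖ ≤ k ∧ ∀ y ∈ s, q.1 - ⟪y, q.2⟫ ≤ f y} :=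
    ⟨(a, g), ha, hg, h.1⟩
  have hle : ∀ y, a - ⟪y, g⟫ ≤ minorantEnvelope s f k y := fun y =>
    le_ciSup (bddAbove_minorantEnvelope s f k y) q
  refine ⟨fun y _ => hle y, le_antisymm (hle x) ?_⟩
  rw [h.2]
  have : Nonempty {q : ℝ × E // |q.1| ≤ k ∧ ‖q.2‖ ≤ k ∧ ∀ y ∈ s, q.1 - ⟪y, q.2⟫ ≤ f y} := ⟨q⟩
  exact ciSup_le fun q => q.2.2.2 x hx

end AffineMinorant

/-! ### Porous sets -/

/-- The density of `S` at each of its points stays below `1 - α ^ dim E`, so by Lebesgue's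
density theorem `S` is null. -/
theorem measure_eq_zero_of_porous {E : Type*} [NormedAddCommGroup E] [NormedSpace ℝ E]
    [FiniteDimensional ℝ E] [MeasurableSpace E] [BorelSpace E] (μ : Measure E)
    [μ.IsAddHaarMeasure] {S : Set E} {α t₀ : ℝ} (hα : 0 < α) (ht₀ : 0 < t₀)
    (hS : ∀ p ∈ S, ∀ t ∈ Ioc 0 t₀, ∃ z, closedBall z (α * t) ⊆ closedBall p t ∧
      Disjoint S (closedBall z (α * t))) :
    μ S = 0 := by
  set c := ENNReal.ofReal (α ^ Module.finrank ℝ E)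
  have hc : 0 < c := ENNReal.ofReal_pos.mpr (pow_pos hα _)
  have hratio : ∀ p ∈ S, ∀ t ∈ Ioc 0 t₀,
      μ (S ∩ closedBall p t) / μ (closedBall p t) ≤ 1 - c := by
    intro p hp t ht
    obtain ⟨z, hzp, hzS⟩ := hS p hp t ht
    have hB0 : μ (closedBall p t) ≠ 0 := (measure_closedBall_pos μ p ht.1).ne'
    have hBtop : μ (closedBall p t) ≠ ⊤ := measure_closedBall_lt_top.ne
    have hz : μ (closedBall z (α * t)) = c * μ (closedBall p t) := by
      rw [Measure.addHaar_closedBall _ _ (by have := ht.1; positivity),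
        Measure.addHaar_closedBall _ _ ht.1.le, mul_pow, ENNReal.ofReal_mul (by positivity),
        mul_assoc]
    have hsum : μ (S ∩ closedBall p t) + c * μ (closedBall p t) ≤ μ (closedBall p t) := by
      rw [← hz, ← measure_union (hzS.mono_left inter_subset_left) measurableSet_closedBall]
      exact measure_mono (union_subset inter_subset_right hzp)
    rw [ENNReal.div_le_iff hB0 hBtop, ENNReal.sub_mul (fun _ _ => hBtop), one_mul]
    exact ENNReal.le_sub_of_add_le_right (ENNReal.mul_ne_top ENNReal.ofReal_ne_top hBtop) hsum
  have hnot : ∀ p ∈ S, ¬Tendsto (fun t => μ (S ∩ closedBall p t) / μ (closedBall p t))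
      (𝓝[>] 0) (𝓝 1) := by
    intro p hp hlim
    have hle : (1 : ℝ≥0∞) ≤ 1 - c := by
      refine le_of_tendsto hlim ?_
      filter_upwards [Ioc_mem_nhdsGT ht₀] with t ht using hratio p hp t ht
    exact (ENNReal.sub_lt_self ENNReal.one_ne_top one_ne_zero hc.ne').not_ge hle
  rw [← Measure.restrict_apply_self]
  exact measure_mono_null hnot (ae_iff.mp (Besicovitch.ae_tendsto_measure_inter_div μ S))

theorem exists_sphere_point_far_from_halfspace {E : Type*} [NormedAddCommGroup E]
    [InnerProductSpace ℝ E] {x v : E} (hx : ‖x‖ = 1) (hv : ‖v‖ = 1) (hxv : ⟪v, x⟫ = 0) {t : ℝ}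
    (ht : 0 < t) (ht' : t ≤ 1 / 8) :
    ∃ z, ‖z‖ = 1 ∧ ‖z - x‖ ≤ 9 / 16 * t ∧ ∀ y, 0 ≤ ⟪v, y⟫ → t / 3 ≤ ‖y - z‖ := by
  set z₀ := x - (t / 2) • v
  have hz₀ : ‖z₀‖ ^ 2 = 1 + t ^ 2 / 4 := by
    rw [norm_sub_sq_real, real_inner_smul_right, real_inner_comm, hxv, norm_smul, hx, hv,
      Real.norm_eq_abs, abs_of_pos (by positivity)]
    ring
  have hz₀1 : 1 ≤ ‖z₀‖ := by nlinarith [norm_nonneg z₀]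
  have hz₀2 : ‖z₀‖ ≤ 1 + t / 64 := by nlinarith [norm_nonneg z₀]
  have hz₀0 : ‖z₀‖ ≠ 0 := by linarith
  refine ⟨‖z₀‖⁻¹ • z₀, norm_smul_inv_norm (norm_ne_zero_iff.mp hz₀0), ?_, fun y hy => ?_⟩
  · have h1 : ‖‖z₀‖⁻¹ • z₀ - z₀‖ = ‖z₀‖ - 1 := by
      have hinv : ‖z₀‖⁻¹ ≤ 1 := inv_le_one_of_one_le₀ hz₀1
      rw [show ‖z₀‖⁻¹ • z₀ - z₀ = (‖z₀‖⁻¹ - 1) • z₀ by rw [sub_smul, one_smul], norm_smul,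
        Real.norm_eq_abs, abs_of_nonpos (by linarith), neg_sub, sub_mul, one_mul,
        inv_mul_cancel₀ hz₀0]
    have h2 : ‖z₀ - x‖ = t / 2 := by
      rw [show z₀ - x = -((t / 2) • v) by simp [z₀], norm_neg, norm_smul, hv, mul_one,
        Real.norm_eq_abs, abs_of_pos (by positivity)]
    calc ‖‖z₀‖⁻¹ • z₀ - x‖ ≤ ‖‖z₀‖⁻¹ • z₀ - z₀‖ + ‖z₀ - x‖ :=
          norm_sub_le_norm_sub_add_norm_sub _ _ _
      _ ≤ 9 / 16 * t := by rw [h1, h2]; linarith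
  · have h1 : ⟪v, y - ‖z₀‖⁻¹ • z₀⟫ = ⟪v, y⟫ + ‖z₀‖⁻¹ * (t / 2) := by
      simp [z₀, inner_sub_right, real_inner_smul_right, hxv, hv]
    have h2 : 2 / 3 ≤ ‖z₀‖⁻¹ := by
      rw [le_inv_comm₀ (by norm_num) (by linarith)]
      linarith
    calc t / 3 ≤ ⟪v, y - ‖z₀‖⁻¹ • z₀⟫ := by rw [h1]; nlinarith
      _ ≤ ‖v‖ * ‖y - ‖z₀‖⁻¹ • z₀‖ := real_inner_le_norm _ _
      _ = ‖y - ‖z₀‖⁻¹ • z₀‖ := by rw [hv, one_mul]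

/-! ### Charts on the sphere -/

abbrev E2 : Type := EuclideanSpace ℝ (Fin 2)

def IsOrthonormalFrame (e u w : E3) : Prop :=
  ‖e‖ = 1 ∧ ‖u‖ = 1 ∧ ‖w‖ = 1 ∧ ∀ x : E3, x = ⟪u, x⟫ • u + ⟪w, x⟫ • w + ⟪e, x⟫ • e

def sphereCoord (u w : E3) : E3 →L[ℝ] E2 :=
  (EuclideanSpace.equiv (Fin 2) ℝ).symm.toContinuousLinearMap.comp
    (ContinuousLinearMap.pi ![innerSL ℝ u, innerSL ℝ w])

def sphereChart (e u w : E3) (p : E2) : E3 := p 0 • u + p 1 • w + √(1 - ‖p‖ ^ 2) • e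

@[simp] theorem sphereCoord_apply_zero (u w x : E3) : sphereCoord u w x 0 = ⟪u, x⟫ := rfl

@[simp] theorem sphereCoord_apply_one (u w x : E3) : sphereCoord u w x 1 = ⟪w, x⟫ := rfl

theorem norm_sq_E2 (p : E2) : ‖p‖ ^ 2 = p 0 ^ 2 + p 1 ^ 2 := by
  rw [EuclideanSpace.norm_sq_eq, Fin.sum_univ_two, Real.norm_eq_abs, Real.norm_eq_abs, sq_abs,
    sq_abs]

theorem differentiableAt_sphereChart {e u w : E3} {p : E2} (hp : ‖p‖ < 1) :
    DifferentiableAt ℝ (sphereChart e u w) p := by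
  have hcoord (i : Fin 2) : DifferentiableAt ℝ (fun q : E2 => q i) p :=
    (EuclideanSpace.proj i : E2 →L[ℝ] ℝ).differentiableAt
  have hsqrt : DifferentiableAt ℝ (fun q : E2 => √(1 - ‖q‖ ^ 2)) p :=
    ((differentiableAt_const 1).sub (differentiableAt_id.norm_sq ℝ)).sqrt
      (by simp only [Pi.sub_apply, id]; nlinarith [norm_nonneg p])
  exact (((hcoord 0).smul_const u).add ((hcoord 1).smul_const w)).add (hsqrt.smul_const e)

namespace IsOrthonormalFrame

variable {e u w : E3}

theorem inner_eq (hF : IsOrthonormalFrame e u w) (x y : E3) :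
    ⟪x, y⟫ = ⟪u, x⟫ * ⟪u, y⟫ + ⟪w, x⟫ * ⟪w, y⟫ + ⟪e, x⟫ * ⟪e, y⟫ := by
  conv_lhs => rw [hF.2.2.2 x]
  simp only [inner_add_left, real_inner_smul_left]

theorem norm_sq (hF : IsOrthonormalFrame e u w) (x : E3) :
    ‖x‖ ^ 2 = ⟪u, x⟫ ^ 2 + ⟪w, x⟫ ^ 2 + ⟪e, x⟫ ^ 2 := by
  rw [← real_inner_self_eq_norm_sq, hF.inner_eq]
  ring

theorem orthogonal (hF : IsOrthonormalFrame e u w) : ⟪u, w⟫ = 0 ∧ ⟪u, e⟫ = 0 ∧ ⟪w, e⟫ = 0 := by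
  have hu := hF.norm_sq u
  have hw := hF.norm_sq w
  rw [hF.2.1, real_inner_self_eq_norm_sq, hF.2.1, real_inner_comm u w, real_inner_comm u e] at hu
  rw [hF.2.2.1, real_inner_self_eq_norm_sq, hF.2.2.1, real_inner_comm w e] at hw
  refine ⟨?_, ?_, ?_⟩ <;> nlinarith [sq_nonneg ⟪u, w⟫, sq_nonneg ⟪u, e⟫, sq_nonneg ⟪w, e⟫]

theorem sphereCoord_sphereChart (hF : IsOrthonormalFrame e u w) (p : E2) :
    sphereCoord u w (sphereChart e u w p) = p := by
  obtain ⟨huw, hue, hwe⟩ := hF.orthogonal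
  ext i
  fin_cases i <;> simp [sphereChart, hF.2.1, hF.2.2.1, huw, hue, hwe, real_inner_comm u w]

theorem inner_sphereChart (hF : IsOrthonormalFrame e u w) (p : E2) :
    ⟪e, sphereChart e u w p⟫ = √(1 - ‖p‖ ^ 2) := by
  obtain ⟨-, hue, hwe⟩ := hF.orthogonal
  simp [sphereChart, inner_add_right, real_inner_smul_right, hF.1, real_inner_comm u e,
    real_inner_comm w e, hue, hwe]

theorem norm_sphereChart (hF : IsOrthonormalFrame e u w) {p : E2} (hp : ‖p‖ ≤ 1) :
    ‖sphereChart e u w p‖ = 1 := by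
  have h := hF.norm_sq (sphereChart e u w p)
  have hc := congrArg (fun q : E2 => ‖q‖ ^ 2) (hF.sphereCoord_sphereChart p)
  simp only [norm_sq_E2, sphereCoord_apply_zero, sphereCoord_apply_one] at hc
  rw [hF.inner_sphereChart, Real.sq_sqrt (by nlinarith [norm_nonneg p]), hc, ← norm_sq_E2] at h
  nlinarith [norm_nonneg (sphereChart e u w p)]

theorem norm_sphereCoord_sq (hF : IsOrthonormalFrame e u w) {x : E3} (hx : ‖x‖ = 1) :
    ‖sphereCoord u w x‖ ^ 2 = 1 - ⟪e, x⟫ ^ 2 := by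
  have h := hF.norm_sq x
  rw [hx] at h
  rw [norm_sq_E2, sphereCoord_apply_zero, sphereCoord_apply_one]
  linarith

theorem norm_sphereCoord_le (hF : IsOrthonormalFrame e u w) (v : E3) :
    ‖sphereCoord u w v‖ ≤ ‖v‖ := by
  have h := hF.norm_sq v
  rw [← pow_le_pow_iff_left₀ (norm_nonneg _) (norm_nonneg _) two_ne_zero, norm_sq_E2,
    sphereCoord_apply_zero, sphereCoord_apply_one]
  nlinarith [sq_nonneg ⟪e, v⟫]

theorem sphereChart_sphereCoord (hF : IsOrthonormalFrame e u w) {x : E3} (hx : ‖x‖ = 1)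
    (hex : 0 ≤ ⟪e, x⟫) : sphereChart e u w (sphereCoord u w x) = x := by
  rw [sphereChart, hF.norm_sphereCoord_sq hx, sub_sub_cancel, Real.sqrt_sq hex,
    sphereCoord_apply_zero, sphereCoord_apply_one]
  exact (hF.2.2.2 x).symm

theorem norm_sub_le_three_mul (hF : IsOrthonormalFrame e u w) {x y : E3} (hx : ‖x‖ = 1)
    (hy : ‖y‖ = 1) (hex : 2 / 5 ≤ ⟪e, x⟫) (hey : 2 / 5 ≤ ⟪e, y⟫) :
    ‖x - y‖ ≤ 3 * ‖sphereCoord u w x - sphereCoord u w y‖ := by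
  set p := sphereCoord u w x
  set q := sphereCoord u w y
  have hp := hF.norm_sphereCoord_sq hx
  have hq := hF.norm_sphereCoord_sq hy
  have hxy : ‖x - y‖ ^ 2 = ‖p - q‖ ^ 2 + (⟪e, x⟫ - ⟪e, y⟫) ^ 2 := by
    rw [hF.norm_sq, ← map_sub, norm_sq_E2, sphereCoord_apply_zero, sphereCoord_apply_one]
    simp only [inner_sub_right]
  have hpq : |‖p‖ ^ 2 - ‖q‖ ^ 2| ≤ 2 * ‖p - q‖ := by
    have hinner : ‖p‖ ^ 2 - ‖q‖ ^ 2 = ⟪p - q, p + q⟫ := by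
      rw [inner_sub_left, inner_add_right, inner_add_right, real_inner_self_eq_norm_sq,
        real_inner_self_eq_norm_sq, real_inner_comm p q]
      ring
    rw [hinner]
    calc |⟪p - q, p + q⟫| ≤ ‖p - q‖ * ‖p + q‖ := abs_real_inner_le_norm _ _
      _ ≤ ‖p - q‖ * 2 := by
          gcongr
          have hp1 : ‖p‖ ≤ 1 := by nlinarith [norm_nonneg p]
          have hq1 : ‖q‖ ≤ 1 := by nlinarith [norm_nonneg q]
          linarith [norm_add_le p q]
      _ = 2 * ‖p - q‖ := mul_comm _ _
  rw [hp, hq, sub_sub_sub_cancel_left, abs_le] at hpq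
  have hab : (⟪e, x⟫ - ⟪e, y⟫) ^ 2 * (16 / 25) ≤ 4 * ‖p - q‖ ^ 2 :=
    calc (⟪e, x⟫ - ⟪e, y⟫) ^ 2 * (16 / 25) ≤ (⟪e, x⟫ - ⟪e, y⟫) ^ 2 * (⟪e, x⟫ + ⟪e, y⟫) ^ 2 := by
          gcongr; nlinarith
      _ = (⟪e, x⟫ ^ 2 - ⟪e, y⟫ ^ 2) ^ 2 := by ring
      _ ≤ (2 * ‖p - q‖) ^ 2 := by apply sq_le_sq' <;> linarith [hpq.1, hpq.2]
      _ = 4 * ‖p - q‖ ^ 2 := by ring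
  have hsq : ‖x - y‖ ^ 2 ≤ (3 * ‖p - q‖) ^ 2 := by nlinarith
  exact (pow_le_pow_iff_left₀ (norm_nonneg _) (by positivity) two_ne_zero).mp hsq

theorem lipschitzOnWith_sphereChart (hF : IsOrthonormalFrame e u w) :
    LipschitzOnWith 3 (sphereChart e u w) (ball 0 (9 / 10)) := by
  have key : ∀ p ∈ ball (0 : E2) (9 / 10),
      ‖sphereChart e u w p‖ = 1 ∧ 2 / 5 ≤ ⟪e, sphereChart e u w p⟫ := by
    intro p hp
    rw [mem_ball_zero_iff] at hp
    refine ⟨hF.norm_sphereChart (by linarith), ?_⟩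
    rw [hF.inner_sphereChart, show (2 / 5 : ℝ) = √((2 / 5) ^ 2) by rw [Real.sqrt_sq]; norm_num]
    exact Real.sqrt_le_sqrt (by nlinarith [norm_nonneg p])
  refine LipschitzOnWith.of_dist_le_mul fun p hp q hq => ?_
  obtain ⟨hp1, hpe⟩ := key p hp
  obtain ⟨hq1, hqe⟩ := key q hq
  simpa [dist_eq_norm, hF.sphereCoord_sphereChart] using hF.norm_sub_le_three_mul hp1 hq1 hpe hqe

theorem sphereCoord_mem_ball (hF : IsOrthonormalFrame e u w) {x : E3} (hx : ‖x‖ = 1)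
    (hex : 1 / 2 < ⟪e, x⟫) : sphereCoord u w x ∈ ball 0 (9 / 10) := by
  have h := hF.norm_sphereCoord_sq hx
  rw [mem_ball_zero_iff]
  nlinarith [norm_nonneg (sphereCoord u w x)]

theorem hausdorffMeasure_eq_zero_of_sphereCoord (hF : IsOrthonormalFrame e u w) {T : Set E3}
    (hT : ∀ x ∈ T, ‖x‖ = 1 ∧ 1 / 2 < ⟪e, x⟫) (h : μH[2] (sphereCoord u w '' T) = 0) :
    μH[2] T = 0 := by
  have hsub : sphereCoord u w '' T ⊆ ball 0 (9 / 10) := by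
    rintro _ ⟨x, hx, rfl⟩
    exact hF.sphereCoord_mem_ball (hT x hx).1 (hT x hx).2
  have himage : sphereChart e u w '' (sphereCoord u w '' T) = T := by
    rw [image_image]
    refine (image_congr fun x hx => ?_).trans (image_id T)
    exact hF.sphereChart_sphereCoord (hT x hx).1 (by linarith [(hT x hx).2])
  rw [← himage, ← nonpos_iff_eq_zero]
  calc _ ≤ 3 ^ (2 : ℝ) * μH[2] (sphereCoord u w '' T) :=
        (hF.lipschitzOnWith_sphereChart.mono hsub).hausdorffMeasure_image_le (by norm_num)
    _ = 0 := by rw [h, mul_zero]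

/-- The chart is a right inverse of the projection `sphereCoord` and takes values in the sphere,
so its differential inverts `sphereCoord` on the tangent plane. -/
theorem fderiv_sphereChart_sphereCoord (hF : IsOrthonormalFrame e u w) {p : E2} (hp : ‖p‖ < 1)
    {τ : E3} (hτ : ⟪sphereChart e u w p, τ⟫ = 0) :
    fderiv ℝ (sphereChart e u w) p (sphereCoord u w τ) = τ := by
  set L := fderiv ℝ (sphereChart e u w) p
  have hL : HasFDerivAt (sphereChart e u w) L p := (differentiableAt_sphereChart hp).hasFDerivAt
  have hcoord : ∀ k, sphereCoord u w (L k) = k := by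
    have hid : sphereCoord u w ∘ sphereChart e u w = id := funext hF.sphereCoord_sphereChart
    have h := (sphereCoord u w).hasFDerivAt.comp p hL
    rw [hid] at h
    exact fun k => congrArg (· k) (h.unique (hasFDerivAt_id p))
  have htangent : ∀ k, ⟪sphereChart e u w p, L k⟫ = 0 := by
    have h1 : HasFDerivAt (fun q => ‖sphereChart e u w q‖ ^ 2) (0 : E2 →L[ℝ] ℝ) p := by
      refine (hasFDerivAt_const (1 : ℝ) p).congr_of_eventuallyEq ?_
      filter_upwards [isOpen_ball.mem_nhds (mem_ball_zero_iff.mpr hp)] with q hq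
      rw [hF.norm_sphereChart (mem_ball_zero_iff.mp hq).le, one_pow]
    intro k
    simpa using congrArg (· k) (hL.norm_sq.unique h1)
  set v := L (sphereCoord u w τ) - τ
  have hv0 : sphereCoord u w v = 0 := by simp only [v, map_sub, hcoord, sub_self]
  have hv : v = ⟪e, v⟫ • e := by
    have hu : ⟪u, v⟫ = 0 := by simpa using congrArg (· 0) hv0
    have hw : ⟪w, v⟫ = 0 := by simpa using congrArg (· 1) hv0
    simpa [hu, hw] using hF.2.2.2 v
  have hev : ⟪e, v⟫ = 0 := by
    have h1 : ⟪sphereChart e u w p, v⟫ = 0 := by simp [v, inner_sub_right, htangent, hτ]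
    rw [hv, real_inner_smul_right, real_inner_comm e, hF.inner_sphereChart] at h1
    have : 0 < √(1 - ‖p‖ ^ 2) := Real.sqrt_pos.mpr (by nlinarith [norm_nonneg p])
    exact (mul_eq_zero.mp h1).resolve_right this.ne'
  rw [hev, zero_smul, sub_eq_zero] at hv
  exact hv

end IsOrthonormalFrame

theorem exists_orthonormalFrame (i : Fin 3) {σ : ℝ} (hσ : σ ^ 2 = 1) :
    ∃ u w, IsOrthonormalFrame (σ • EuclideanSpace.single i 1) u w := by
  have hσ' : |σ| = 1 := (pow_eq_one_iff_of_nonneg (abs_nonneg σ) two_ne_zero).mp (by rwa [sq_abs])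
  have hσσ : σ * σ = 1 := by rw [← sq, hσ]
  refine ⟨EuclideanSpace.single (i + 1) 1, EuclideanSpace.single (i + 2) 1,
    by simp [norm_smul, hσ'], by simp, by simp, fun x => ?_⟩
  ext j
  fin_cases i <;> fin_cases j <;> simp [EuclideanSpace.inner_single_left, real_inner_smul_left] <;>
    rw [mul_right_comm, hσσ, one_mul]

theorem exists_cap {x : E3} (hx : ‖x‖ = 1) : ∃ (i : Fin 3) (b : Bool),
    1 / 2 < ⟪(bif b then (1 : ℝ) else -1) • EuclideanSpace.single i 1, x⟫ := by
  have hsum : x 0 ^ 2 + x 1 ^ 2 + x 2 ^ 2 = 1 := by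
    have := EuclideanSpace.norm_sq_eq x
    simp only [Fin.sum_univ_three, Real.norm_eq_abs, sq_abs, hx] at this
    linarith
  obtain ⟨i, hi⟩ : ∃ i : Fin 3, 1 / 4 < x i ^ 2 := by
    by_contra! h
    linarith [h 0, h 1, h 2]
  refine ⟨i, decide (0 ≤ x i), ?_⟩
  by_cases h : 0 ≤ x i <;> simp [h, EuclideanSpace.inner_single_left] <;> nlinarith

theorem ae_sphere_of_forall_orthonormalFrame {P : E3 → Prop}
    (h : ∀ e u w, IsOrthonormalFrame e u w → ∀ᵐ x ∂μH[2], ‖x‖ = 1 → 1 / 2 < ⟪e, x⟫ → P x) :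
    ∀ᵐ x ∂(μH[2] : Measure E3), ‖x‖ = 1 → P x := by
  have hcap : ∀ (i : Fin 3) (b : Bool), ∀ᵐ x ∂μH[2], ‖x‖ = 1 →
      1 / 2 < ⟪(bif b then (1 : ℝ) else -1) • EuclideanSpace.single i 1, x⟫ → P x := by
    intro i b
    obtain ⟨u, w, hF⟩ :=
      exists_orthonormalFrame i (σ := bif b then 1 else -1) (by cases b <;> norm_num)
    exact h _ u w hF
  filter_upwards [ae_all_iff.mpr fun i => ae_all_iff.mpr (hcap i)] with x hx hx1
  obtain ⟨i, b, hib⟩ := exists_cap hx1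
  exact hx i b hx1 hib

/-! ### Null sets on the sphere -/

-- Mathlib states this for `μH[(d : ℕ)]`, which does not unify with the real literal `2`.
instance : (μH[2] : Measure E2).IsAddHaarMeasure := by
  simpa using (inferInstance : (μH[((2 : ℕ) : ℝ)] : Measure E2).IsAddHaarMeasure)

/-- In each chart `f ∘ sphereChart` is differentiable a.e. (Rademacher), and at such points
the tangential part of the gradient of every touching minorant is its derivative. -/
theorem LipschitzWith.ae_sphere_isTouchingMinorant_sub_eq {f : E3 → ℝ} {K : ℝ≥0}
    (hf : LipschitzWith K f) :
    ∀ᵐ x ∂(μH[2] : Measure E3), ‖x‖ = 1 → ∀ a₁ a₂ g₁ g₂, IsTouchingMinorant univ f x a₁ g₁ →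
      IsTouchingMinorant univ f x a₂ g₂ → g₁ - g₂ = ⟪x, g₁ - g₂⟫ • x := by
  refine ae_sphere_of_forall_orthonormalFrame fun e u w hF => ?_
  have hdiff : ∀ᵐ p ∂(μH[2] : Measure E2),
      p ∈ ball 0 (9 / 10) → DifferentiableAt ℝ (f ∘ sphereChart e u w) p := by
    filter_upwards [(hf.comp_lipschitzOnWith hF.lipschitzOnWith_sphereChart
      ).ae_differentiableWithinAt_of_mem (μ := μH[2])] with p hp hpU
    exact (hp hpU).differentiableAt (isOpen_ball.mem_nhds hpU)
  set T := {x : E3 | ‖x‖ = 1 ∧ 1 / 2 < ⟪e, x⟫ ∧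
    ¬DifferentiableAt ℝ (f ∘ sphereChart e u w) (sphereCoord u w x)}
  have hT : μH[2] T = 0 := by
    refine hF.hausdorffMeasure_eq_zero_of_sphereCoord (fun x hx => ⟨hx.1, hx.2.1⟩)
      (measure_mono_null ?_ (ae_iff.mp hdiff))
    rintro _ ⟨x, ⟨hx1, hxe, hnd⟩, rfl⟩
    exact fun h => hnd (h (hF.sphereCoord_mem_ball hx1 hxe))
  filter_upwards [measure_eq_zero_iff_ae_notMem.mp hT] with x hxT hx1 hxe a₁ a₂ g₁ g₂ h₁ h₂
  have hdx : DifferentiableAt ℝ (f ∘ sphereChart e u w) (sphereCoord u w x) := by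
    by_contra h
    exact hxT ⟨hx1, hxe, h⟩
  have hpx : sphereChart e u w (sphereCoord u w x) = x :=
    hF.sphereChart_sphereCoord hx1 (by linarith)
  have hp : ‖sphereCoord u w x‖ < 1 := by
    linarith [mem_ball_zero_iff.mp (hF.sphereCoord_mem_ball hx1 hxe)]
  refine eq_inner_smul_of_forall_inner_eq_zero hx1 fun τ hτ => ?_
  rw [← hpx] at h₁ h₂
  have h := h₁.inner_fderiv_eq (differentiableAt_sphereChart hp).hasFDerivAt hdx h₂
    (sphereCoord u w τ)
  rw [hF.fderiv_sphereChart_sphereCoord hp (by rwa [hpx, real_inner_comm])] at h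
  rw [inner_sub_right, h, sub_self]

/-- Minorants with `|a|, ‖g‖ ≤ k` remain touching minorants of their `k`-Lipschitz envelope. -/
theorem ae_sphere_isTouchingMinorant_sub_eq (s : Set E3) (f : E3 → ℝ) :
    ∀ᵐ x ∂(μH[2] : Measure E3), ‖x‖ = 1 → x ∈ s → ∀ a₁ a₂ g₁ g₂,
      IsTouchingMinorant s f x a₁ g₁ → IsTouchingMinorant s f x a₂ g₂ →
        g₁ - g₂ = ⟪x, g₁ - g₂⟫ • x := by
  filter_upwards [ae_all_iff.mpr fun k : ℕ =>
    (lipschitzWith_minorantEnvelope s f k).ae_sphere_isTouchingMinorant_sub_eq]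
    with x hx hx1 hxs a₁ a₂ g₁ g₂ h₁ h₂
  obtain ⟨k, hk⟩ := exists_nat_ge (max (max |a₁| |a₂|) (max ‖g₁‖ ‖g₂‖))
  simp only [max_le_iff] at hk
  exact hx k hx1 a₁ a₂ g₁ g₂ (h₁.isTouchingMinorant_minorantEnvelope hxs hk.1.1 hk.2.1)
    (h₂.isTouchingMinorant_minorantEnvelope hxs hk.1.2 hk.2.2)

/-- In the chart, the image of `S` is porous: next to each of its points it misses the image of
a ball centred on the far side of the supporting great circle. -/
theorem IsOrthonormalFrame.hausdorffMeasure_cap_eq_zero_of_supporting_hemispheres {e u w : E3}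
    (hF : IsOrthonormalFrame e u w) {S : Set E3} (hS : ∀ x ∈ S, ‖x‖ = 1)
    (h : ∀ x ∈ S, ∃ v ≠ 0, ⟪v, x⟫ = 0 ∧ ∀ y ∈ S, 0 ≤ ⟪v, y⟫) :
    μH[2] {x ∈ S | 1 / 2 < ⟪e, x⟫} = 0 := by
  refine hF.hausdorffMeasure_eq_zero_of_sphereCoord (fun x hx => ⟨hS x hx.1, hx.2⟩) ?_
  refine measure_eq_zero_of_porous μH[2] (α := 1 / 10) (t₀ := 1 / 8) (by norm_num) (by norm_num) ?_
  rintro _ ⟨x, ⟨hxS, hxe⟩, rfl⟩ t ⟨ht, ht'⟩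
  obtain ⟨v, hv0, hvx, hvS⟩ := h x hxS
  obtain ⟨z, hz1, hzx, hfar⟩ := exists_sphere_point_far_from_halfspace (hS x hxS)
    (norm_smul_inv_norm hv0) (by rw [real_inner_smul_left, hvx, mul_zero]) ht ht'
  have hze : 2 / 5 ≤ ⟪e, z⟫ := by
    have := abs_real_inner_le_norm e (z - x)
    rw [hF.1, one_mul, inner_sub_right] at this
    linarith [neg_abs_le (⟪e, z⟫ - ⟪e, x⟫)]
  refine ⟨sphereCoord u w z, closedBall_subset_closedBall' ?_, ?_⟩
  · rw [dist_eq_norm, ← map_sub]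
    linarith [hF.norm_sphereCoord_le (z - x)]
  · rw [Set.disjoint_left]
    rintro _ ⟨y, ⟨hyS, hye⟩, rfl⟩ hy
    rw [mem_closedBall, dist_eq_norm] at hy
    have h1 := hfar y (by
      rw [real_inner_smul_left]
      exact mul_nonneg (inv_nonneg.2 (norm_nonneg v)) (hvS y hyS))
    have h2 := hF.norm_sub_le_three_mul (hS y hyS) hz1 (by linarith) hze
    linarith

theorem hausdorffMeasure_eq_zero_of_supporting_hemispheres {S : Set E3} (hS : ∀ x ∈ S, ‖x‖ = 1)
    (h : ∀ x ∈ S, ∃ v ≠ 0, ⟪v, x⟫ = 0 ∧ ∀ y ∈ S, 0 ≤ ⟪v, y⟫) : μH[2] S = 0 := by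
  have hae := ae_sphere_of_forall_orthonormalFrame (P := (· ∉ S)) fun e u w hF => by
    filter_upwards [measure_eq_zero_iff_ae_notMem.mp
      (hF.hausdorffMeasure_cap_eq_zero_of_supporting_hemispheres hS h)]
      with x hx _ hxe hxS using hx ⟨hxS, hxe⟩
  rw [measure_eq_zero_iff_ae_notMem]
  filter_upwards [hae] with x hx hxS using hx (hS x hxS) hxS

/-! ### Ellipsoids of revolution and the reflection law -/

section ReflectionLaw

variable {E : Type*} [NormedAddCommGroup E] [InnerProductSpace ℝ E]

/-- The second focus of the ellipsoid of revolution with a focus at the origin and polar equation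
`1 / ρ(x) = a - ⟪x, g⟫`. -/
def focus (a : ℝ) (g : E) : E :=
  (2 / (a ^ 2 - ‖g‖ ^ 2)) • g

theorem focus_add_smul {x h : E} (hx : ‖x‖ = 1) {r : ℝ} (hr : ⟪x, h⟫ = -r) (hr0 : r ≠ 0) {a : ℝ}
    (hD : a ^ 2 - ‖h + a • x‖ ^ 2 ≠ 0) :
    focus a (h + a • x) =
      r⁻¹ • x + (r * (a ^ 2 - ‖h + a • x‖ ^ 2))⁻¹ • ((2 * r) • h + ‖h‖ ^ 2 • x) := by
  have hD' : a ^ 2 - ‖h + a • x‖ ^ 2 = 2 * a * r - ‖h‖ ^ 2 := by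
    rw [norm_add_sq_real, real_inner_smul_right, real_inner_comm, hr, norm_smul, hx, mul_one,
      Real.norm_eq_abs, sq_abs]
    ring
  rw [hD'] at hD ⊢
  rw [focus, hD']
  match_scalars <;> field_simp
  ring

/-- Reflection law: ellipsoids with a focus at the origin that pass through `r⁻¹ • x` with a common
tangent plane there reflect the ray through `x` in the same direction, so their second foci are
collinear with `r⁻¹ • x`. -/
theorem inner_eq_of_focus_mem_plane {x g₁ g₂ n : E} {a₁ a₂ r c : ℝ} (hx : ‖x‖ = 1)
    (h₁ : a₁ - ⟪x, g₁⟫ = r) (h₂ : a₂ - ⟪x, g₂⟫ = r) (hr : r ≠ 0)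
    (hrad : g₁ - g₂ = ⟪x, g₁ - g₂⟫ • x) (hD₁ : a₁ ^ 2 - ‖g₁‖ ^ 2 ≠ 0)
    (hD₂ : a₂ ^ 2 - ‖g₂‖ ^ 2 ≠ 0) (hne : focus a₁ g₁ ≠ focus a₂ g₂)
    (hn₁ : ⟪focus a₁ g₁, n⟫ = c) (hn₂ : ⟪focus a₂ g₂, n⟫ = c) : r⁻¹ * ⟪x, n⟫ = c := by
  set h := g₁ - a₁ • x
  have hg₁ : g₁ = h + a₁ • x := by simp [h]
  have hg₂ : g₂ = h + a₂ • x := by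
    have hk : ⟪x, g₁ - g₂⟫ = a₁ - a₂ := by rw [inner_sub_right]; linarith
    rw [hk] at hrad
    calc g₂ = g₁ - (g₁ - g₂) := by abel
      _ = h + a₂ • x := by rw [hrad, sub_smul]; simp only [h]; abel
  have hxh : ⟪x, h⟫ = -r := by
    simp only [h, inner_sub_right, real_inner_smul_right, real_inner_self_eq_norm_sq, hx]
    linarith
  rw [hg₁] at hD₁ hne hn₁
  rw [hg₂] at hD₂ hne hn₂
  rw [focus_add_smul hx hxh hr hD₁] at hne hn₁
  rw [focus_add_smul hx hxh hr hD₂] at hne hn₂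
  set V := (2 * r) • h + ‖h‖ ^ 2 • x
  set l₁ := (r * (a₁ ^ 2 - ‖h + a₁ • x‖ ^ 2))⁻¹
  set l₂ := (r * (a₂ ^ 2 - ‖h + a₂ • x‖ ^ 2))⁻¹
  simp only [inner_add_left, real_inner_smul_left] at hn₁ hn₂
  have hV : (l₁ - l₂) * ⟪V, n⟫ = 0 := by linarith
  rcases mul_eq_zero.mp hV with hl | hV
  · exact absurd (by rw [sub_eq_zero.mp hl]) hne
  · rwa [hV, mul_zero, add_zero] at hn₁

end ReflectionLaw

def supportGrad (P : E3) (d : ℝ) : E3 := (ecc P d / d) • axisDir P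

theorem ecc_mem_Ioo {P : E3} (hP : P ≠ 0) {d : ℝ} (hd : 0 < d) : ecc P d ∈ Ioo 0 1 := by
  have hq : 0 < d / ‖P‖ := div_pos hd (norm_pos_iff.mpr hP)
  have hs := Real.sq_sqrt (show 0 ≤ 1 + (d / ‖P‖) ^ 2 by positivity)
  have hs0 := Real.sqrt_nonneg (1 + (d / ‖P‖) ^ 2)
  rw [ecc, ← div_pow]
  constructor <;> nlinarith

theorem norm_mul_one_sub_ecc_sq {P : E3} (hP : P ≠ 0) (d : ℝ) :
    ‖P‖ * (1 - ecc P d ^ 2) = 2 * d * ecc P d := by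
  have hs := Real.sq_sqrt (show 0 ≤ 1 + (d / ‖P‖) ^ 2 by positivity)
  have h : 1 - ecc P d ^ 2 = 2 * (d / ‖P‖) * ecc P d := by
    rw [ecc, ← div_pow]
    linear_combination -hs
  rw [h]
  field_simp [norm_ne_zero_iff.mpr hP]

theorem norm_axisDir {P : E3} (hP : P ≠ 0) : ‖axisDir P‖ = 1 := by
  rw [axisDir, norm_smul, norm_inv, norm_norm, inv_mul_cancel₀ (norm_ne_zero_iff.mpr hP)]

theorem inv_polarRadius (P : E3) (d : ℝ) (y : E3) :
    (polarRadius P d y)⁻¹ = d⁻¹ - ⟪y, supportGrad P d⟫ := by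
  rw [polarRadius, inv_div, supportGrad, real_inner_smul_right, rinner]
  ring

theorem sq_sub_norm_supportGrad_sq {P : E3} (hP : P ≠ 0) {d : ℝ} (hd : 0 < d) :
    d⁻¹ ^ 2 - ‖supportGrad P d‖ ^ 2 = (1 - ecc P d ^ 2) / d ^ 2 := by
  obtain ⟨hε0, -⟩ := ecc_mem_Ioo hP hd
  rw [supportGrad, norm_smul, norm_axisDir hP, mul_one, Real.norm_eq_abs,
    abs_of_pos (div_pos hε0 hd)]
  field_simp

theorem focus_supportGrad {P : E3} (hP : P ≠ 0) {d : ℝ} (hd : 0 < d) :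
    focus d⁻¹ (supportGrad P d) = P := by
  obtain ⟨hε0, hε1⟩ := ecc_mem_Ioo hP hd
  have h1 : 1 - ecc P d ^ 2 ≠ 0 := by nlinarith
  have hP' : ‖P‖ ≠ 0 := norm_ne_zero_iff.mpr hP
  have h := norm_mul_one_sub_ecc_sq hP d
  rw [focus, sq_sub_norm_supportGrad_sq hP hd, supportGrad, axisDir, smul_smul, smul_smul]
  convert one_smul ℝ P using 2
  field_simp
  linear_combination -h

/-! ### The reflector -/

section Reflector

variable {Ω D : Set E3} {ρ : E3 → ℝ}

theorem IsSupportingAt.isTouchingMinorant {P : E3} {d : ℝ} {x : E3}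
    (h : IsSupportingAt Ω ρ P d x) (hρ : ∀ y ∈ closure Ω, 0 < ρ y) :
    IsTouchingMinorant (closure Ω) (fun y => (ρ y)⁻¹) x d⁻¹ (supportGrad P d) := by
  refine ⟨fun y hy => ?_, ?_⟩
  · rw [← inv_polarRadius]
    exact inv_anti₀ (hρ y hy) (h.2.2.1 y hy)
  · rw [← inv_polarRadius, ← h.2.2.2]

theorem ae_inner_eq_of_isSupportingAt (hρ : ∀ y ∈ closure Ω, 0 < ρ y) :
    ∀ᵐ x ∂(μH[2] : Measure E3), ‖x‖ = 1 → x ∈ closure Ω → ∀ P₁ d₁ P₂ d₂,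
      IsSupportingAt Ω ρ P₁ d₁ x → IsSupportingAt Ω ρ P₂ d₂ x → P₁ ≠ P₂ →
        ∀ n c, ⟪P₁, n⟫ = c → ⟪P₂, n⟫ = c → ρ x * ⟪x, n⟫ = c := by
  filter_upwards [ae_sphere_isTouchingMinorant_sub_eq (closure Ω) fun y => (ρ y)⁻¹]
    with x hx hx1 hxΩ P₁ d₁ P₂ d₂ h₁ h₂ hne n c hn₁ hn₂
  have t₁ := h₁.isTouchingMinorant hρ
  have t₂ := h₂.isTouchingMinorant hρ
  have hD (P d) (h : IsSupportingAt Ω ρ P d x) : d⁻¹ ^ 2 - ‖supportGrad P d‖ ^ 2 ≠ 0 := by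
    obtain ⟨hε0, hε1⟩ := ecc_mem_Ioo h.1 h.2.1
    rw [sq_sub_norm_supportGrad_sq h.1 h.2.1]
    exact div_ne_zero (by nlinarith) (pow_pos h.2.1 2).ne'
  rw [← focus_supportGrad h₁.1 h₁.2.1] at hne hn₁
  rw [← focus_supportGrad h₂.1 h₂.2.1] at hne hn₂
  simpa using inner_eq_of_focus_mem_plane hx1 t₁.2 t₂.2 (inv_ne_zero (hρ x hxΩ).ne')
    (hx hx1 hxΩ _ _ _ _ t₁ t₂) (hD P₁ d₁ h₁) (hD P₂ d₂ h₂) hne hn₁ hn₂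

/-- On the plane section `1 / ρ` is the linear function `c⁻¹ ⟪n, ·⟫`, so the supporting
ellipsoid at `x` bounds the section by an affine inequality vanishing at `x`. -/
theorem IsReflector.exists_inner_ge_of_mem_plane (hσ : IsReflector Ω D ρ)
    (hΩ : ∀ x ∈ closure Ω, ‖x‖ = 1) {n : E3} {c : ℝ} (hc : c ≠ 0) {x : E3}
    (hx : x ∈ {x ∈ closure Ω | ρ x * ⟪x, n⟫ = c}) :
    ∃ G : E3, ∃ δ > 0, ⟪G, x⟫ = 0 ∧
      ∀ y ∈ {x ∈ closure Ω | ρ x * ⟪x, n⟫ = c}, δ * (1 - ⟪x, y⟫) ≤ ⟪G, y⟫ := by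
  obtain ⟨P, -, d, hP⟩ := hσ.2 x hx.1
  have ht := hP.isTouchingMinorant hσ.1
  have hinv : ∀ y ∈ {x ∈ closure Ω | ρ x * ⟪x, n⟫ = c}, c⁻¹ * ⟪n, y⟫ = (ρ y)⁻¹ := fun y hy => by
    have hyn : ⟪y, n⟫ ≠ 0 := fun h => hc (by rw [← hy.2, h, mul_zero])
    rw [real_inner_comm, ← hy.2]
    field_simp [(hσ.1 y hy.1).ne', hyn]
  set G := c⁻¹ • n + supportGrad P d - d⁻¹ • x
  have hGy : ∀ y ∈ {x ∈ closure Ω | ρ x * ⟪x, n⟫ = c},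
      ⟪G, y⟫ = (ρ y)⁻¹ - (d⁻¹ - ⟪y, supportGrad P d⟫) + d⁻¹ * (1 - ⟪x, y⟫) := fun y hy => by
    simp only [G, inner_sub_left, inner_add_left, real_inner_smul_left, hinv y hy,
      real_inner_comm (supportGrad P d) y]
    ring
  refine ⟨G, d⁻¹, inv_pos.2 hP.2.1, ?_, fun y hy => by linarith [hGy y hy, ht.1 y hy.1]⟩
  have h2 : d⁻¹ - ⟪x, supportGrad P d⟫ = (ρ x)⁻¹ := ht.2
  rw [hGy x hx, h2, real_inner_self_eq_norm_sq, hΩ x hx.1]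
  ring

theorem IsReflector.hausdorffMeasure_inter_plane_eq_zero (hσ : IsReflector Ω D ρ)
    (hΩ : ∀ x ∈ closure Ω, ‖x‖ = 1) {n : E3} (hn : n ≠ 0) (c : ℝ) :
    μH[2] {x ∈ closure Ω | ρ x * ⟪x, n⟫ = c} = 0 := by
  set S := {x ∈ closure Ω | ρ x * ⟪x, n⟫ = c}
  rcases eq_or_ne c 0 with rfl | hc
  · refine hausdorffMeasure_eq_zero_of_supporting_hemispheres (fun x hx => hΩ x hx.1)
      fun x hx => ?_
    have hn0 : ∀ y ∈ S, ⟪n, y⟫ = 0 := fun y hy => by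
      rw [real_inner_comm]
      exact (mul_eq_zero.mp hy.2).resolve_left (hσ.1 y hy.1).ne'
    exact ⟨n, hn, hn0 x hx, fun y hy => (hn0 y hy).ge⟩
  have : NullSingletonClass (μH[2] : Measure E3) := Measure.nullSingletonClass_hausdorff E3 two_pos
  by_cases hS : S.Subsingleton
  · exact hS.measure_zero _
  refine hausdorffMeasure_eq_zero_of_supporting_hemispheres (fun x hx => hΩ x hx.1) fun x hx => ?_
  obtain ⟨G, δ, hδ, hGx, hG⟩ := hσ.exists_inner_ge_of_mem_plane hΩ hc hx
  have hxy : ∀ y ∈ S, ⟪x, y⟫ ≤ 1 := fun y hy =>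
    (real_inner_le_norm x y).trans (by rw [hΩ x hx.1, hΩ y hy.1, one_mul])
  refine ⟨G, fun hG0 => hS ?_, hGx, fun y hy =>
    (mul_nonneg hδ.le (sub_nonneg.2 (hxy y hy))).trans (hG y hy)⟩
  refine (subsingleton_singleton (a := x)).anti fun y hy => ?_
  have h1 := hG y hy
  rw [hG0, inner_zero_left] at h1
  have h2 : ⟪x, y⟫ = 1 := le_antisymm (hxy y hy) (by nlinarith)
  exact ((inner_eq_one_iff_of_norm_eq_one (hΩ x hx.1) (hΩ y hy.1)).mp h2).symm

end Reflector

theorem exists_ne_zero_inner_eq_zero (a b : E3) : ∃ v : E3, v ≠ 0 ∧ ⟪a, v⟫ = 0 ∧ ⟪b, v⟫ = 0 := by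
  set K := Submodule.span ℝ ({a, b} : Set E3)
  have hK : Module.finrank ℝ K ≤ 2 := by
    have := finrank_span_finset_le_card (R := ℝ) ({a, b} : Finset E3)
    rw [Finset.coe_insert, Finset.coe_singleton] at this
    exact this.trans Finset.card_le_two
  have hKperp : Kᗮ ≠ ⊥ := by
    intro h
    have := K.finrank_add_finrank_orthogonal
    rw [h, finrank_bot, finrank_euclideanSpace, Fintype.card_fin] at this
    omega
  obtain ⟨v, hv, hv0⟩ := Submodule.exists_mem_ne_zero_of_ne_bot hKperp
  rw [Submodule.mem_orthogonal] at hv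
  exact ⟨v, hv0, hv a (Submodule.subset_span (by simp)), hv b (Submodule.subset_span (by simp))⟩

theorem exists_countable_planes {D : Set E3} (hD : InPlane D ∨ D.Countable) :
    ∃ W : Set (E3 × ℝ), W.Countable ∧ (∀ p ∈ W, p.1 ≠ 0) ∧
      ∀ P₁ ∈ D, ∀ P₂ ∈ D, ∃ p ∈ W, ⟪P₁, p.1⟫ = p.2 ∧ ⟪P₂, p.1⟫ = p.2 := by
  rcases hD with ⟨v, hv, c, hvc⟩ | hD
  · exact ⟨{(v, c)}, countable_singleton _, by simpa using hv,
      fun P₁ h₁ P₂ h₂ => ⟨(v, c), rfl, hvc P₁ h₁, hvc P₂ h₂⟩⟩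
  choose w hw0 hw₁ hw₂ using exists_ne_zero_inner_eq_zero
  refine ⟨(fun z : E3 × E3 => (w z.1 z.2, 0)) '' D ×ˢ D, (hD.prod hD).image _, ?_,
    fun P₁ h₁ P₂ h₂ => ⟨_, mem_image_of_mem _ (mk_mem_prod h₁ h₂), hw₁ P₁ P₂, hw₂ P₁ P₂⟩⟩
  rintro _ ⟨z, -, rfl⟩
  exact hw0 z.1 z.2

theorem tracing_inter_null_of_disjoint_general
    (Ω : Set E3) (hΩ : Ω ⊆ sphere2)
    (D : Set E3)
    (hDpc : InPlane D ∨ D.Countable)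
    (ρ : E3 → ℝ) (hσ : IsReflector Ω D ρ)
    (A B : Set E3) (hA : A ⊆ D) (hB : B ⊆ D) (hAB : Disjoint A B) :
    μH[2] (tracing Ω ρ A ∩ tracing Ω ρ B) = 0 := by
  have hΩ1 : ∀ x ∈ closure Ω, ‖x‖ = 1 := fun x hx =>
    mem_sphere_zero_iff_norm.mp (closure_minimal hΩ isClosed_sphere hx)
  obtain ⟨W, hWc, hW0, hWD⟩ := exists_countable_planes hDpc
  have hW : ∀ᵐ x ∂μH[2], ∀ p ∈ W, x ∉ {x ∈ closure Ω | ρ x * ⟪x, p.1⟫ = p.2} :=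
    (ae_ball_iff hWc).mpr fun p hp => measure_eq_zero_iff_ae_notMem.mp
      (hσ.hausdorffMeasure_inter_plane_eq_zero hΩ1 (hW0 p hp) p.2)
  rw [measure_eq_zero_iff_ae_notMem]
  filter_upwards [ae_inner_eq_of_isSupportingAt hσ.1, hW] with x hx hxW ⟨hx₁, hx₂⟩
  obtain ⟨hxΩ, P₁, h₁A, d₁, h₁⟩ := hx₁
  obtain ⟨-, P₂, h₂B, d₂, h₂⟩ := hx₂
  obtain ⟨p, hpW, hp₁, hp₂⟩ := hWD P₁ (hA h₁A) P₂ (hB h₂B)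
  exact hxW p hpW ⟨hxΩ, hx (hΩ1 x hxΩ) hxΩ P₁ d₁ P₂ d₂ h₁ h₂ (hAB.ne_of_mem h₁A h₂B) p.1 p.2
    hp₁ hp₂⟩

/-- If `σ` is a reflector from `closure Ω` to a compact target `D` with
`O ∉ D`, `D` contained in a plane or countable, and `A, B ⊆ D` are disjoint, then
`τ_σ(A) ∩ τ_σ(B)` has surface measure zero. -/
theorem tracing_inter_null_of_disjoint
    (Ω : Set E3) (hΩ : Ω ⊆ sphere2) (hfr : μH[2] (sphFrontier Ω) = 0)
    (D : Set E3) (hD : IsCompact D) (hO : (0 : E3) ∉ D)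
    (hDpc : InPlane D ∨ D.Countable)
    (ρ : E3 → ℝ) (hσ : IsReflector Ω D ρ)
    (A B : Set E3) (hA : A ⊆ D) (hB : B ⊆ D) (hAB : Disjoint A B) :
    μH[2] (tracing Ω ρ A ∩ tracing Ω ρ B) = 0 :=
  tracing_inter_null_of_disjoint_general Ω hΩ D hDpc ρ hσ A B hA hB hAB
end
end
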